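/- arXiv:2004.14063 — 3 statements merged into one kernel-verified Lean document; each statement's English description precedes it below -/
import Mathlib

section
/- Suppose L is additionally a Noether lattice with a unique maximal element m (quasi-local). If p ∈ L is a proper element such that p² = m², m² ≤ p and p ≤ m, then p is φ₂-δ₁-primary; that is, for all x, y ∈ L, x·y ≤ p and x·y ≰ p² imply x ≤ p or y ≤ √p. -/
open CompleteLattice

/-- The compact elements of a complete lattice, as Mathlib defined them in December 2024. -/
def CompleteLattice.IsCompactElement {α : Type*} [CompleteLattice α] (k : α) :=
  ∀ s : Set α, k ≤ sSup s → ∃ t : Finset α, ↑t ⊆ s ∧ k ≤ t.sup id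

variable {L : Type*} [CompleteLattice L] [CommMonoid L]

/-- `L` is a compactly generated multiplicative lattice: multiplication distributes over
arbitrary joins, the top element is the multiplicative identity, `1` is a compact element,
every element is a join of compact elements, and products of compact elements are compact. -/
def IsCGMultLattice (L : Type*) [CompleteLattice L] [CommMonoid L] : Prop :=
  (∀ (a : L) (S : Set L), a * sSup S = ⨆ b ∈ S, a * b) ∧
  ((1 : L) = ⊤) ∧
  CompleteLattice.IsCompactElement (1 : L) ∧
  (∀ a : L, a = sSup {x : L | CompleteLattice.IsCompactElement x ∧ x ≤ a}) ∧
  (∀ x y : L, CompleteLattice.IsCompactElement x → CompleteLattice.IsCompactElement y →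
    CompleteLattice.IsCompactElement (x * y))

/-- An expansion function on `L`: `a ≤ δ a` and `δ` is monotone. -/
def IsExpansion (δ : L → L) : Prop :=
  (∀ a : L, a ≤ δ a) ∧ ∀ a b : L, a ≤ b → δ a ≤ δ b

/-- A proper element `p` is `φ`-`δ`-primary if `a*b ≤ p` and `a*b ≰ φ p` imply
`a ≤ p` or `b ≤ δ p`. -/
def IsPhiDeltaPrimary (φ δ : L → L) (p : L) : Prop :=
  p < 1 ∧ ∀ a b : L, a * b ≤ p → ¬ a * b ≤ φ p → a ≤ p ∨ b ≤ δ p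

/-- A proper element `p` is `δ`-primary if `a*b ≤ p` implies `a ≤ p` or `b ≤ δ p`. -/
def IsDeltaPrimary (δ : L → L) (p : L) : Prop :=
  p < 1 ∧ ∀ a b : L, a * b ≤ p → a ≤ p ∨ b ≤ δ p

/-- A proper element `p` is `φ`-prime if `a*b ≤ p` and `a*b ≰ φ p` imply
`a ≤ p` or `b ≤ p`. -/
def IsPhiPrime (φ : L → L) (p : L) : Prop :=
  p < 1 ∧ ∀ a b : L, a * b ≤ p → ¬ a * b ≤ φ p → a ≤ p ∨ b ≤ p

/-- The residual `(a : b)`, the join of all `x` with `x * b ≤ a`. -/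
def lres (a b : L) : L := sSup {x : L | x * b ≤ a}

/-- The radical `√a`, the join of all compact `x` with `x ^ n ≤ a` for some `n ≥ 1`. -/
def lradical (a : L) : L :=
  sSup {x : L | CompleteLattice.IsCompactElement x ∧ ∃ n : ℕ, 0 < n ∧ x ^ n ≤ a}

/-- A principal element of a multiplicative lattice. -/
def IsPrincipalElem (e : L) : Prop :=
  ∀ a b : L, a ⊓ b * e = (lres a e ⊓ b) * e ∧ lres (a * e ⊔ b) e = lres b e ⊔ a

/-- A Noether lattice: modular, principally generated, satisfying the ascending
chain condition. -/
def IsNoetherLattice (L : Type*) [CompleteLattice L] [CommMonoid L] : Prop :=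
  IsModularLattice L ∧ (∀ a : L, a = sSup {e : L | IsPrincipalElem e ∧ e ≤ a}) ∧
  WellFoundedGT L

/-- A maximal element: proper, and `m < x ≤ 1` implies `x = 1`. -/
def IsMaximalElem (m : L) : Prop :=
  m < 1 ∧ ∀ x : L, m < x → x ≤ 1 → x = 1

/-!
Since `m ^ 2 ≤ p`, every element below `m` lies in `√p`. If `y ≰ m`, maximality gives
`m ⊔ y = 1`, so `x = x * m ⊔ x * y` and `x * m = x * m ^ 2 ⊔ x * m * y`; both pieces lie below `p`
because `m ^ 2 ≤ p` and `x * y ≤ p`, hence `x ≤ p`.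
-/

theorem mul_sup_of_sSup_distrib (hdist : ∀ (a : L) (S : Set L), a * sSup S = ⨆ b ∈ S, a * b)
    (a b c : L) : a * (b ⊔ c) = a * b ⊔ a * c := by
  rw [← sSup_pair, hdist, iSup_pair]

theorem mul_le_mul_of_mul_sup (hsup : ∀ a b c : L, a * (b ⊔ c) = a * b ⊔ a * c)
    {a b c d : L} (hab : a ≤ b) (hcd : c ≤ d) : a * c ≤ b * d := by
  have mono_right {b c : L} (h : b ≤ c) (a : L) : a * b ≤ a * c := by
    rw [← sup_eq_right.mpr h, hsup]
    exact le_sup_left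
  calc a * c ≤ a * d := mono_right hcd a
    _ = d * a := mul_comm a d
    _ ≤ d * b := mono_right hab d
    _ = b * d := mul_comm d b

theorem pow_le_pow_left_of_mul_sup (hsup : ∀ a b c : L, a * (b ⊔ c) = a * b ⊔ a * c)
    {a b : L} (hab : a ≤ b) (n : ℕ) : a ^ n ≤ b ^ n := by
  induction n with
  | zero => rw [pow_zero, pow_zero]
  | succ n ih =>
    rw [pow_succ, pow_succ]
    exact mul_le_mul_of_mul_sup hsup ih hab

theorem mul_le_right_of_mul_sup (hsup : ∀ a b c : L, a * (b ⊔ c) = a * b ⊔ a * c)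
    (hone : (1 : L) = ⊤) (a b : L) : a * b ≤ b :=
  calc a * b ≤ 1 * b := mul_le_mul_of_mul_sup hsup (hone ▸ le_top) le_rfl
    _ = b := one_mul b

theorem le_lradical_of_pow_le (hsup : ∀ a b c : L, a * (b ⊔ c) = a * b ⊔ a * c)
    (hgen : ∀ a : L, a = sSup {x : L | CompleteLattice.IsCompactElement x ∧ x ≤ a})
    {a p : L} {n : ℕ} (hn : 0 < n) (h : a ^ n ≤ p) : a ≤ lradical p := by
  rw [hgen a]
  refine sSup_le_sSup fun x ⟨hx, hxa⟩ => ⟨hx, n, hn, ?_⟩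
  exact (pow_le_pow_left_of_mul_sup hsup hxa n).trans h

theorem le_of_mul_le_of_sup_eq_one (hsup : ∀ a b c : L, a * (b ⊔ c) = a * b ⊔ a * c)
    {a m y p : L} (hmy : m ⊔ y = 1) (ham : a * m ≤ p) (hay : a * y ≤ p) : a ≤ p :=
  calc a = a * (m ⊔ y) := by rw [hmy, mul_one]
    _ = a * m ⊔ a * y := hsup a m y
    _ ≤ p := sup_le ham hay

theorem le_of_mul_pow_le_of_sup_eq_one (hsup : ∀ a b c : L, a * (b ⊔ c) = a * b ⊔ a * c)
    (hone : (1 : L) = ⊤) {x m y p : L} (hmy : m ⊔ y = 1) (hxy : x * y ≤ p) :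
    ∀ {n : ℕ}, x * m ^ n ≤ p → x ≤ p
  | 0, h => by rwa [pow_zero, mul_one] at h
  | n + 1, h => by
    refine le_of_mul_pow_le_of_sup_eq_one hsup hone hmy hxy (n := n) ?_
    refine le_of_mul_le_of_sup_eq_one hsup hmy (by rwa [mul_assoc, ← pow_succ]) ?_
    calc x * m ^ n * y = m ^ n * (x * y) := by ac_rfl
      _ ≤ x * y := mul_le_right_of_mul_sup hsup hone _ _
      _ ≤ p := hxy

theorem IsMaximalElem.sup_eq_one_of_not_le (hone : (1 : L) = ⊤) {m y : L}
    (hm : IsMaximalElem m) (hym : ¬ y ≤ m) : m ⊔ y = 1 :=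
  hm.2 _ (left_lt_sup.mpr hym) (hone ▸ le_top)

theorem quasiLocal_sq_eq_max_sq_phi2_delta1_primary_general (hL : IsCGMultLattice L)
    (m : L) (hm : IsMaximalElem m)
    (p : L) (h2 : m ^ 2 ≤ p) :
    ∀ x y : L, x * y ≤ p → ¬ x * y ≤ p ^ 2 → x ≤ p ∨ y ≤ lradical p := by
  obtain ⟨hdist, hone, -, hgen, -⟩ := hL
  have hsup := mul_sup_of_sSup_distrib hdist
  intro x y hxy _
  by_cases hym : y ≤ m
  · exact Or.inr (hym.trans (le_lradical_of_pow_le hsup hgen two_pos h2))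
  · refine Or.inl (le_of_mul_pow_le_of_sup_eq_one hsup hone
      (hm.sup_eq_one_of_not_le hone hym) hxy (n := 2) ?_)
    exact (mul_le_right_of_mul_sup hsup hone x _).trans h2

theorem quasiLocal_sq_eq_max_sq_phi2_delta1_primary (hL : IsCGMultLattice L)
    (hN : IsNoetherLattice L) (m : L) (hm : IsMaximalElem m)
    (hmu : ∀ m' : L, IsMaximalElem m' → m' = m)
    (p : L) (hp : p < 1) (h1 : p ^ 2 = m ^ 2) (h2 : m ^ 2 ≤ p) (h3 : p ≤ m) :
    ∀ x y : L, x * y ≤ p → ¬ x * y ≤ p ^ 2 → x ≤ p ∨ y ≤ lradical p :=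
  quasiLocal_sq_eq_max_sq_phi2_delta1_primary_general hL m hm p h2
end

section
/- Let δ be an expansion function on L and p ∈ L a proper element. Then p is φ_ω-δ-primary if and only if p is φ_n-δ-primary for every integer n ≥ 2. -/
open CompleteLattice

variable {L : Type*} [CompleteLattice L] [CommMonoid L]

/-- Only `p ⊓ φ p` matters, because the condition is tested only on products `a * b ≤ p`;
this is why the exponent `k = 1` in `φ_ω` is harmless. -/
theorem IsPhiDeltaPrimary.of_inf_le {φ ψ δ : L → L} {p : L} (h : IsPhiDeltaPrimary φ δ p)
    (hφψ : p ⊓ φ p ≤ ψ p) : IsPhiDeltaPrimary ψ δ p :=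
  ⟨h.1, fun a b hab hψ => h.2 a b hab fun hφ => hψ (le_trans (le_inf hab hφ) hφψ)⟩

theorem isPhiDeltaPrimary_biInf {ι : Type*} {s : Set ι} (hs : s.Nonempty) {φ : ι → L → L}
    {δ : L → L} {p : L} (h : ∀ i ∈ s, IsPhiDeltaPrimary (φ i) δ p) :
    IsPhiDeltaPrimary (fun a => ⨅ i ∈ s, φ i a) δ p := by
  obtain ⟨i₀, hi₀⟩ := hs
  refine ⟨(h i₀ hi₀).1, fun a b hab hnot => ?_⟩
  simp only [le_iInf_iff, not_forall] at hnot
  obtain ⟨i, hi, hφ⟩ := hnot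
  exact (h i hi).2 a b hab hφ

theorem inf_biInf_pow_le {M : Type*} [CompleteLattice M] [Monoid M] (a : M) :
    a ⊓ ⨅ n ∈ Set.Ici 2, a ^ n ≤ ⨅ (k : ℕ) (_ : 1 ≤ k), a ^ k := by
  refine le_iInf₂ fun k hk => ?_
  obtain rfl | hk2 := hk.eq_or_lt
  · exact (pow_one a).symm ▸ inf_le_left
  · exact inf_le_right.trans (biInf_le _ (Set.mem_Ici.2 hk2))

theorem phiOmega_iff_phiN_general
    (δ : L → L) (p : L) :
    IsPhiDeltaPrimary (fun a : L => ⨅ (k : ℕ) (_ : 1 ≤ k), a ^ k) δ p ↔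
      ∀ n : ℕ, 2 ≤ n → IsPhiDeltaPrimary (fun a : L => a ^ n) δ p := by
  constructor
  · intro h n hn
    exact h.of_inf_le (inf_le_right.trans (iInf₂_le n (by omega)))
  · intro h
    exact (isPhiDeltaPrimary_biInf ⟨2, Set.mem_Ici.2 le_rfl⟩ h).of_inf_le (inf_biInf_pow_le p)

theorem phiOmega_iff_phiN (hL : IsCGMultLattice L)
    (δ : L → L) (hδ : IsExpansion δ) (p : L) (hp : p < 1) :
    IsPhiDeltaPrimary (fun a : L => ⨅ (k : ℕ) (_ : 1 ≤ k), a ^ k) δ p ↔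
      ∀ n : ℕ, 2 ≤ n → IsPhiDeltaPrimary (fun a : L => a ^ n) δ p :=
  phiOmega_iff_phiN_general δ p
end

section
/- Let δ be an expansion function on L and let q ∈ L be a proper element which is 2-potent δ-primary, i.e. for all a, b ∈ L, a·b ≤ q² implies a ≤ q or b ≤ δ(q). Let φ : L → L be a function with φ(a) ≤ a and φ(a) ≤ a² for all a ∈ L. Then q is φ-δ-primary if and only if q is δ-primary. -/
open CompleteLattice

variable {L : Type*} [CompleteLattice L] [CommMonoid L]

theorem IsDeltaPrimary.isPhiDeltaPrimary {δ : L → L} {p : L} (h : IsDeltaPrimary δ p)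
    (φ : L → L) : IsPhiDeltaPrimary φ δ p :=
  ⟨h.1, fun a b hab _ => h.2 a b hab⟩

theorem IsPhiDeltaPrimary.isDeltaPrimary {φ δ : L → L} {p : L} (h : IsPhiDeltaPrimary φ δ p)
    (hφp : φ p ≤ p ^ 2) (h2pot : ∀ a b : L, a * b ≤ p ^ 2 → a ≤ p ∨ b ≤ δ p) :
    IsDeltaPrimary δ p := by
  refine ⟨h.1, fun a b hab => ?_⟩
  by_cases hφ : a * b ≤ φ p
  · exact h2pot a b (hφ.trans hφp)
  · exact h.2 a b hab hφ

theorem twoPotent_phi_iff_delta_general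
    (δ : L → L) (q : L)
    (h2pot : ∀ a b : L, a * b ≤ q ^ 2 → a ≤ q ∨ b ≤ δ q)
    (φ : L → L) (hφ2 : ∀ a : L, φ a ≤ a ^ 2) :
    IsPhiDeltaPrimary φ δ q ↔ IsDeltaPrimary δ q :=
  ⟨fun h => h.isDeltaPrimary (hφ2 q) h2pot, fun h => h.isPhiDeltaPrimary φ⟩

theorem twoPotent_phi_iff_delta (hL : IsCGMultLattice L)
    (δ : L → L) (hδ : IsExpansion δ) (q : L) (hq : q < 1)
    (h2pot : ∀ a b : L, a * b ≤ q ^ 2 → a ≤ q ∨ b ≤ δ q)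
    (φ : L → L) (hφ : ∀ a : L, φ a ≤ a) (hφ2 : ∀ a : L, φ a ≤ a ^ 2) :
    IsPhiDeltaPrimary φ δ q ↔ IsDeltaPrimary δ q :=
  twoPotent_phi_iff_delta_general δ q h2pot φ hφ2
end
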